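/- arXiv:1910.01136 — 12 statements merged into one kernel-verified Lean document; each statement's English description precedes it below -/
import Mathlib

section
/- Let C be a finite type, S a subset of C, ψ : C → ℂ with ψ(α) ≠ 0 if and only if α ∈ S and Σ_{α} |ψ(α)|² = 1, and let P be the associated local classical projector matrix. If Ψ : C → ℂ satisfies P.mulVec Ψ = 0 and Ψ(α₀) ≠ 0 for some α₀ ∈ S, then Ψ(β) ≠ 0 for every β ∈ S, and moreover Ψ(α)·ψ(β) = Ψ(β)·ψ(α) for all α, β ∈ S; that is, the ratio of ground-state amplitudes between two configurations connected by the projector is determined entirely by the local data ψ. -/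
/-!
Ground states of `P = diag(1_S) - ψ ψ*` satisfy `Ψ α = ψ α ⟪ψ, Ψ⟫` for every `α ∈ S`, so on `S`
the ground state is the fixed vector `ψ` scaled by the single number `⟪ψ, Ψ⟫`. That number is
nonzero as soon as `Ψ` does not vanish somewhere on `S`, and `ψ` itself vanishes nowhere on `S`.
-/

open Matrix

namespace Matrix

variable {C R : Type*} [DecidableEq C] [CommRing R]

theorem mul_apply_eq_of_diagonal_sub_vecMulVec_mulVec_eq_zero [Fintype C] {d u w Ψ : C → R}
    (hΨ : (diagonal d - vecMulVec u w) *ᵥ Ψ = 0) (α : C) :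
    d α * Ψ α = u α * (w ⬝ᵥ Ψ) := by
  have h := congrFun hΨ α
  rwa [sub_mulVec, vecMulVec_mulVec, Pi.sub_apply, mulVec_diagonal, Pi.smul_apply, op_smul_eq_mul,
    Pi.zero_apply, sub_eq_zero] at h

theorem eq_diagonal_sub_vecMulVec_of_apply_eq (S : Set C) [DecidablePred (· ∈ S)] {u w : C → R}
    {P : Matrix C C R} (hP : ∀ α β, P α β = (if α = β ∧ α ∈ S then 1 else 0) - u α * w β) :
    P = diagonal (fun α ↦ if α ∈ S then 1 else 0) - vecMulVec u w := by
  ext α β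
  rw [hP, sub_apply, vecMulVec_apply, diagonal_apply]
  by_cases hαβ : α = β
  · subst hαβ; simp
  · simp [hαβ]

end Matrix

theorem ground_state_ratio_local_general
    {C : Type*} [Fintype C] [DecidableEq C]
    (S : Set C) [DecidablePred (· ∈ S)] (ψ : C → ℂ)
    (hsupp : ∀ α, ψ α ≠ 0 ↔ α ∈ S)
    (P : Matrix C C ℂ)
    (hP : ∀ α β, P α β =
      (if α = β ∧ α ∈ S then (1 : ℂ) else 0) - ψ α * (starRingEnd ℂ) (ψ β))
    (Ψ : C → ℂ) (hΨ : P.mulVec Ψ = 0)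
    (α₀ : C) (hα₀S : α₀ ∈ S) (hα₀ : Ψ α₀ ≠ 0) :
    (∀ β ∈ S, Ψ β ≠ 0) ∧ (∀ α ∈ S, ∀ β ∈ S, Ψ α * ψ β = Ψ β * ψ α) := by
  rw [eq_diagonal_sub_vecMulVec_of_apply_eq S hP] at hΨ
  set c := (fun β ↦ starRingEnd ℂ (ψ β)) ⬝ᵥ Ψ
  have hΨS : ∀ α ∈ S, Ψ α = ψ α * c := fun α hα ↦ by
    simpa [hα] using mul_apply_eq_of_diagonal_sub_vecMulVec_mulVec_eq_zero hΨ α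
  have hc : c ≠ 0 := fun hc0 ↦ hα₀ (by rw [hΨS α₀ hα₀S, hc0, mul_zero])
  refine ⟨fun β hβ ↦ ?_, fun α hα β hβ ↦ ?_⟩
  · rw [hΨS β hβ]
    exact mul_ne_zero ((hsupp β).2 hβ) hc
  · rw [hΨS α hα, hΨS β hβ]
    ring

/-- **Locality of ground-state amplitude ratios.** If `P` is the local classical projector
associated to `(S, ψ)` and `Ψ` is annihilated by `P` with `Ψ α₀ ≠ 0` for some `α₀ ∈ S`,
then `Ψ` is nonzero on all of `S` and the ratios of its amplitudes on `S` agree with those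
of the local data `ψ`. -/
theorem ground_state_ratio_local
    {C : Type*} [Fintype C] [DecidableEq C]
    (S : Set C) [DecidablePred (· ∈ S)] (ψ : C → ℂ)
    (hsupp : ∀ α, ψ α ≠ 0 ↔ α ∈ S)
    (hnorm : ∑ α, Complex.normSq (ψ α) = 1)
    (P : Matrix C C ℂ)
    (hP : ∀ α β, P α β =
      (if α = β ∧ α ∈ S then (1 : ℂ) else 0) - ψ α * (starRingEnd ℂ) (ψ β))
    (Ψ : C → ℂ) (hΨ : P.mulVec Ψ = 0)
    (α₀ : C) (hα₀S : α₀ ∈ S) (hα₀ : Ψ α₀ ≠ 0) :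
    (∀ β ∈ S, Ψ β ≠ 0) ∧ (∀ α ∈ S, ∀ β ∈ S, Ψ α * ψ β = Ψ β * ψ α) :=
  ground_state_ratio_local_general S ψ hsupp P hP Ψ hΨ α₀ hα₀S hα₀
end

section
/- (Theorem 1, part 1.) Let H = Σ_{i∈ι} P_i be a frustration-free Hamiltonian that is a sum of local classical projectors, with ground state Ψ, and let A = {α ∈ C | Ψ(α) ≠ 0} be the support of Ψ. Then the span of the basis vectors indexed by A is an invariant subspace of H: for every α with Ψ(α) ≠ 0 and every β with Ψ(β) = 0, the matrix entry H(β,α) = 0 (and by Hermiticity also H(α,β) = 0). -/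
/-!
A ground state `Ψ` of the classical projector of `(S, ψ)` agrees on `S` with `ψ` times the
overlap `⟨ψ, Ψ⟩`. So if `Ψ` vanishes at some `β` with `ψ β ≠ 0`, the overlap is zero and `Ψ`
vanishes on all of `S`. Hence `ψ α * ψ β = 0` whenever `Ψ α ≠ 0 = Ψ β`, which kills the entries
of every projector, and so of `H`, between the support of `Ψ` and its complement.
-/

open Matrix ComplexConjugate

def classicalProjector {C : Type*} [DecidableEq C] (S : Set C) [DecidablePred (· ∈ S)]
    (ψ : C → ℂ) : Matrix C C ℂ :=
  of fun α β => (if α = β ∧ α ∈ S then 1 else 0) - ψ α * conj (ψ β)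

section
variable {C : Type*} [DecidableEq C] {S : Set C} [DecidablePred (· ∈ S)] {ψ : C → ℂ}

theorem classicalProjector_isHermitian : (classicalProjector S ψ).IsHermitian := by
  ext α β
  by_cases h : α = β
  · simp [classicalProjector, h, mul_comm]
  · simp [classicalProjector, h, Ne.symm h, mul_comm]

theorem classicalProjector_mulVec_apply [Fintype C] (Ψ : C → ℂ) (γ : C) :
    (classicalProjector S ψ *ᵥ Ψ) γ = (if γ ∈ S then Ψ γ else 0) - ψ γ * (star ψ ⬝ᵥ Ψ) := by
  simp [classicalProjector, mulVec, dotProduct, sub_mul, Finset.sum_sub_distrib,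
    Finset.mul_sum, mul_assoc, ite_and, ite_mul]

theorem apply_eq_mul_of_classicalProjector_mulVec_eq_zero [Fintype C] {Ψ : C → ℂ}
    (hΨ : classicalProjector S ψ *ᵥ Ψ = 0) {γ : C} (hγ : γ ∈ S) :
    Ψ γ = ψ γ * (star ψ ⬝ᵥ Ψ) := by
  have := congrFun hΨ γ
  rwa [classicalProjector_mulVec_apply, if_pos hγ, Pi.zero_apply, sub_eq_zero] at this

theorem classicalProjector_apply_eq_zero_of_mulVec_eq_zero [Fintype C]
    (hψ : Function.support ψ ⊆ S) {Ψ : C → ℂ} (hΨ : classicalProjector S ψ *ᵥ Ψ = 0)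
    {α β : C} (hα : Ψ α ≠ 0) (hβ : Ψ β = 0) : classicalProjector S ψ β α = 0 := by
  have hne : β ≠ α := fun h => hα (h ▸ hβ)
  suffices ψ β = 0 ∨ ψ α = 0 by
    rcases this with h | h <;> simp [classicalProjector, hne, h]
  by_contra! h
  obtain ⟨hψβ, hψα⟩ := h
  have hoverlap : star ψ ⬝ᵥ Ψ = 0 := by
    have := apply_eq_mul_of_classicalProjector_mulVec_eq_zero hΨ (hψ hψβ)
    rw [hβ, eq_comm, mul_eq_zero] at this
    exact this.resolve_left hψβ
  exact hα <| by
    rw [apply_eq_mul_of_classicalProjector_mulVec_eq_zero hΨ (hψ hψα), hoverlap, mul_zero]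
end

theorem frustration_free_support_invariant_general
    {C : Type*} [Fintype C] [DecidableEq C]
    {ι : Type*} [Fintype ι]
    (S : ι → Set C) [∀ i, DecidablePred (· ∈ S i)] (ψ : ι → C → ℂ)
    (hsupp : ∀ i α, ψ i α ≠ 0 ↔ α ∈ S i)
    (P : ι → Matrix C C ℂ)
    (hP : ∀ i α β, P i α β =
      (if α = β ∧ α ∈ S i then (1 : ℂ) else 0) - ψ i α * (starRingEnd ℂ) (ψ i β))
    (H : Matrix C C ℂ) (hH : H = ∑ i, P i)
    (Ψ : C → ℂ) (hΨ : ∀ i, (P i).mulVec Ψ = 0) :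
    ∀ α β : C, Ψ α ≠ 0 → Ψ β = 0 → H β α = 0 ∧ H α β = 0 := by
  intro α β hα hβ
  obtain rfl : P = fun i => classicalProjector (S i) (ψ i) := funext fun i => ext (hP i)
  have hHerm : H.IsHermitian :=
    hH ▸ isSelfAdjoint_sum _ fun _ _ => classicalProjector_isHermitian
  have hβα : H β α = 0 := by
    rw [hH, Matrix.sum_apply]
    exact Finset.sum_eq_zero fun i _ => classicalProjector_apply_eq_zero_of_mulVec_eq_zero
      (fun γ => (hsupp i γ).mp) (hΨ i) hα hβ
  exact ⟨hβα, by rw [← hHerm.apply, hβα, star_zero]⟩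

/-- **Theorem 1, part 1.** For a frustration-free Hamiltonian `H = ∑ i, P i` that is a sum
of local classical projectors, with ground state `Ψ`, the span of the configurations in the
support `A = {α | Ψ α ≠ 0}` is an invariant subspace of `H`: all matrix elements of `H`
between the support and its complement vanish. -/
theorem frustration_free_support_invariant
    {C : Type*} [Fintype C] [DecidableEq C]
    {ι : Type*} [Fintype ι]
    (S : ι → Set C) [∀ i, DecidablePred (· ∈ S i)] (ψ : ι → C → ℂ)
    (hsupp : ∀ i α, ψ i α ≠ 0 ↔ α ∈ S i)
    (hnorm : ∀ i, ∑ α, Complex.normSq (ψ i α) = 1)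
    (P : ι → Matrix C C ℂ)
    (hP : ∀ i α β, P i α β =
      (if α = β ∧ α ∈ S i then (1 : ℂ) else 0) - ψ i α * (starRingEnd ℂ) (ψ i β))
    (H : Matrix C C ℂ) (hH : H = ∑ i, P i)
    (Ψ : C → ℂ) (hΨ : ∀ i, (P i).mulVec Ψ = 0) :
    ∀ α β : C, Ψ α ≠ 0 → Ψ β = 0 → H β α = 0 ∧ H α β = 0 :=
  frustration_free_support_invariant_general S ψ hsupp P hP H hH Ψ hΨ
end

section
/- (Theorem 1, part 2: positivity of transition rates.) Let H = Σ_{i∈ι} P_i be a frustration-free Hamiltonian that is a sum of local classical projectors with ground state Ψ, let A be the support of Ψ, and let W be the transition-rate matrix W(α,β) = −conj(Ψ(α))·H(α,β)/conj(Ψ(β)). Then for all α ≠ β in A, W(α,β) = Σ_{i : α ∈ S_i and β ∈ S_i} |ψ_i(α)|²; in particular every off-diagonal entry of W on A × A is a nonnegative real number. -/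
/-!
On `S`, the equation `P Ψ = 0` for the local classical projector of `(S, ψ)` says that `Ψ`
agrees with a multiple of `ψ`, namely `ψ ⟨ψ, Ψ⟩`. Hence `Ψ α ψ β = ψ α Ψ β` for `α, β ∈ S`,
and the `i`-th term `conj (Ψ α) ψᵢ α conj (ψᵢ β) / conj (Ψ β)` of `W α β` collapses to
`|ψᵢ α|²`; when `α` or `β` lies outside `Sᵢ` the term vanishes, because `ψᵢ` does.
-/

open Matrix ComplexConjugate

section

variable {C : Type*} [DecidableEq C]

def localClassicalProjector (S : Set C) [DecidablePred (· ∈ S)] (ψ : C → ℂ) : Matrix C C ℂ :=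
  of fun α β => (if α = β ∧ α ∈ S then 1 else 0) - ψ α * conj (ψ β)

variable (S : Set C) [DecidablePred (· ∈ S)] (ψ : C → ℂ)

theorem localClassicalProjector_apply_of_ne {α β : C} (hne : α ≠ β) :
    localClassicalProjector S ψ α β = -(ψ α * conj (ψ β)) := by
  simp [localClassicalProjector, hne]

variable [Fintype C]

theorem localClassicalProjector_mulVec_apply (v : C → ℂ) (γ : C) :
    (localClassicalProjector S ψ *ᵥ v) γ = (if γ ∈ S then v γ else 0) - ψ γ * (star ψ ⬝ᵥ v) := by
  simp only [localClassicalProjector, mulVec, dotProduct, of_apply, sub_mul,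
    Finset.sum_sub_distrib, ite_and, ite_mul, one_mul, zero_mul, Finset.sum_ite_eq,
    Finset.mem_univ, if_true, Finset.mul_sum, Pi.star_apply, RCLike.star_def, mul_assoc]

variable {S ψ}

theorem apply_eq_mul_dotProduct_of_mulVec_eq_zero {v : C → ℂ}
    (hv : localClassicalProjector S ψ *ᵥ v = 0) {γ : C} (hγ : γ ∈ S) :
    v γ = ψ γ * (star ψ ⬝ᵥ v) := by
  have h := congrFun hv γ
  rwa [localClassicalProjector_mulVec_apply, if_pos hγ, Pi.zero_apply, sub_eq_zero] at h

theorem apply_mul_eq_mul_apply_of_mulVec_eq_zero {v : C → ℂ}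
    (hv : localClassicalProjector S ψ *ᵥ v = 0) {α β : C} (hα : α ∈ S) (hβ : β ∈ S) :
    v α * ψ β = ψ α * v β := by
  rw [apply_eq_mul_dotProduct_of_mulVec_eq_zero hv hα,
    apply_eq_mul_dotProduct_of_mulVec_eq_zero hv hβ]
  ring

theorem conj_mul_div_conj_eq_ite_normSq (hψ : ∀ γ, ψ γ ≠ 0 → γ ∈ S) {v : C → ℂ}
    (hv : localClassicalProjector S ψ *ᵥ v = 0) (α : C) {β : C} (hβ : v β ≠ 0) :
    conj (v α) * (ψ α * conj (ψ β)) / conj (v β) =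
      if α ∈ S ∧ β ∈ S then (Complex.normSq (ψ α) : ℂ) else 0 := by
  by_cases hαS : α ∈ S
  · by_cases hβS : β ∈ S
    · have hcross := congrArg conj (apply_mul_eq_mul_apply_of_mulVec_eq_zero hv hαS hβS)
      simp only [map_mul] at hcross
      rw [if_pos ⟨hαS, hβS⟩, Complex.normSq_eq_conj_mul_self,
        div_eq_iff ((map_ne_zero conj).mpr hβ)]
      linear_combination ψ α * hcross
    · rw [if_neg (fun h => hβS h.2), not_not.mp (mt (hψ β) hβS)]
      simp
  · rw [if_neg (fun h => hαS h.1), not_not.mp (mt (hψ α) hαS)]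
    simp

end

theorem frustration_free_transition_rates_nonneg_general
    {C : Type*} [Fintype C] [DecidableEq C]
    {ι : Type*} [Fintype ι]
    (S : ι → Set C) [∀ i, DecidablePred (· ∈ S i)] (ψ : ι → C → ℂ)
    (hsupp : ∀ i α, ψ i α ≠ 0 ↔ α ∈ S i)
    (P : ι → Matrix C C ℂ)
    (hP : ∀ i α β, P i α β =
      (if α = β ∧ α ∈ S i then (1 : ℂ) else 0) - ψ i α * (starRingEnd ℂ) (ψ i β))
    (H : Matrix C C ℂ) (hH : H = ∑ i, P i)
    (Ψ : C → ℂ) (hΨ : ∀ i, (P i).mulVec Ψ = 0)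
    (W : Matrix C C ℂ)
    (hW : ∀ α β, W α β = -((starRingEnd ℂ) (Ψ α) * H α β / (starRingEnd ℂ) (Ψ β))) :
    ∀ α β : C, Ψ α ≠ 0 → Ψ β ≠ 0 → α ≠ β →
      W α β = (↑(∑ i ∈ Finset.univ.filter (fun i => α ∈ S i ∧ β ∈ S i),
                  Complex.normSq (ψ i α)) : ℂ) ∧
      (W α β).im = 0 ∧ 0 ≤ (W α β).re := by
  intro α β _ hβ hne
  have hPi : ∀ i, P i = localClassicalProjector (S i) (ψ i) := fun i => Matrix.ext (hP i)
  have hWsum : W α β = ∑ i, conj (Ψ α) * (ψ i α * conj (ψ i β)) / conj (Ψ β) := by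
    rw [hW, hH, Matrix.sum_apply, Finset.mul_sum, Finset.sum_div, ← Finset.sum_neg_distrib]
    refine Finset.sum_congr rfl fun i _ => ?_
    rw [hPi, localClassicalProjector_apply_of_ne _ _ hne]
    ring
  have hWeq : W α β = (↑(∑ i ∈ Finset.univ.filter (fun i => α ∈ S i ∧ β ∈ S i),
      Complex.normSq (ψ i α)) : ℂ) := by
    rw [hWsum, Complex.ofReal_sum, Finset.sum_filter]
    refine Finset.sum_congr rfl fun i _ => ?_
    rw [conj_mul_div_conj_eq_ite_normSq (fun γ => (hsupp i γ).mp) (hPi i ▸ hΨ i) α hβ]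
  refine ⟨hWeq, by rw [hWeq, Complex.ofReal_im], ?_⟩
  rw [hWeq, Complex.ofReal_re]
  exact Finset.sum_nonneg fun i _ => Complex.normSq_nonneg _

/-- **Theorem 1, part 2 (positivity of transition rates).** For a frustration-free
Hamiltonian `H = ∑ i, P i` that is a sum of local classical projectors with ground state
`Ψ`, the off-diagonal entries of the transition-rate matrix
`W α β = -conj (Ψ α) * H α β / conj (Ψ β)` on the support of `Ψ` are the sums
`∑_{i : α ∈ S i ∧ β ∈ S i} |ψ i α|²`; in particular they are nonnegative reals. -/
theorem frustration_free_transition_rates_nonneg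
    {C : Type*} [Fintype C] [DecidableEq C]
    {ι : Type*} [Fintype ι]
    (S : ι → Set C) [∀ i, DecidablePred (· ∈ S i)] (ψ : ι → C → ℂ)
    (hsupp : ∀ i α, ψ i α ≠ 0 ↔ α ∈ S i)
    (hnorm : ∀ i, ∑ α, Complex.normSq (ψ i α) = 1)
    (P : ι → Matrix C C ℂ)
    (hP : ∀ i α β, P i α β =
      (if α = β ∧ α ∈ S i then (1 : ℂ) else 0) - ψ i α * (starRingEnd ℂ) (ψ i β))
    (H : Matrix C C ℂ) (hH : H = ∑ i, P i)
    (Ψ : C → ℂ) (hΨ : ∀ i, (P i).mulVec Ψ = 0)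
    (W : Matrix C C ℂ)
    (hW : ∀ α β, W α β = -((starRingEnd ℂ) (Ψ α) * H α β / (starRingEnd ℂ) (Ψ β))) :
    ∀ α β : C, Ψ α ≠ 0 → Ψ β ≠ 0 → α ≠ β →
      W α β = (↑(∑ i ∈ Finset.univ.filter (fun i => α ∈ S i ∧ β ∈ S i),
                  Complex.normSq (ψ i α)) : ℂ) ∧
      (W α β).im = 0 ∧ 0 ≤ (W α β).re :=
  frustration_free_transition_rates_nonneg_general S ψ hsupp P hP H hH Ψ hΨ W hW
end

section
/- (Theorem 1, part 2: conservation of classical probability.) Let H = Σ_{i∈ι} P_i be a frustration-free Hamiltonian that is a sum of local classical projectors with ground state Ψ, let A be the support of Ψ, and let W be the transition-rate matrix W(α,β) = −conj(Ψ(α))·H(α,β)/conj(Ψ(β)). Then every column of W restricted to A sums to zero: for every β ∈ A, Σ_{α ∈ A} W(α,β) = 0. -/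
/-! Each local classical projector is Hermitian, hence so is `H`, and then `H Ψ = 0` also gives
`Ψᴴ H = 0`. The column sum of `W` over the support is `-(Ψᴴ H)_β / conj (Ψ β)`, because the
terms with `Ψ α = 0` vanish anyway. -/

open Matrix

section

variable {C R : Type*} [CommRing R] [StarRing R]

theorem Matrix.isHermitian_of_apply_eq_indicator_sub_mul_star [DecidableEq C]
    (S : Set C) [DecidablePred (· ∈ S)] (ψ : C → R) (P : Matrix C C R)
    (hP : ∀ α β, P α β = (if α = β ∧ α ∈ S then (1 : R) else 0) - ψ α * starRingEnd R (ψ β)) :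
    P.IsHermitian := by
  ext α β
  rw [conjTranspose_apply, hP, hP, star_sub, star_mul', starRingEnd_apply, starRingEnd_apply,
    star_star, mul_comm]
  by_cases h : α = β
  · subst h
    split_ifs <;> simp
  · simp [h, Ne.symm h]

theorem Matrix.IsHermitian.star_vecMul_eq_zero [Fintype C] {H : Matrix C C R}
    (hH : H.IsHermitian) {v : C → R} (hv : H *ᵥ v = 0) : star v ᵥ* H = 0 := by
  rw [← hH.eq, ← star_mulVec, hv, star_zero]

end

theorem frustration_free_probability_conservation_general
    {C : Type*} [Fintype C] [DecidableEq C]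
    {ι : Type*} [Fintype ι]
    (S : ι → Set C) [∀ i, DecidablePred (· ∈ S i)] (ψ : ι → C → ℂ)
    (P : ι → Matrix C C ℂ)
    (hP : ∀ i α β, P i α β =
      (if α = β ∧ α ∈ S i then (1 : ℂ) else 0) - ψ i α * (starRingEnd ℂ) (ψ i β))
    (H : Matrix C C ℂ) (hH : H = ∑ i, P i)
    (Ψ : C → ℂ) (hΨ : ∀ i, (P i).mulVec Ψ = 0)
    (W : Matrix C C ℂ)
    (hW : ∀ α β, W α β = -((starRingEnd ℂ) (Ψ α) * H α β / (starRingEnd ℂ) (Ψ β))) :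
    ∀ β : C, Ψ β ≠ 0 → ∑ α : {a : C // Ψ a ≠ 0}, W α.1 β = 0 := by
  intro β _
  have hHerm : H.IsHermitian := hH ▸ isSelfAdjoint_sum _ fun i _ =>
    isHermitian_of_apply_eq_indicator_sub_mul_star (S i) (ψ i) (P i) (hP i)
  have hground : H *ᵥ Ψ = 0 := by
    simp only [hH, sum_mulVec, hΨ, Finset.sum_const_zero]
  have hcolumn : ∑ α, starRingEnd ℂ (Ψ α) * H α β = 0 :=
    congrFun (hHerm.star_vecMul_eq_zero hground) β
  calc ∑ α : {a : C // Ψ a ≠ 0}, W α.1 β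
      = ∑ α, W α β := (Finset.sum_congr_set {a | Ψ a ≠ 0} _ _ (fun _ _ => rfl)
          fun α hα => by
            rw [Set.mem_ofPred_eq, not_not] at hα
            rw [hW, hα, map_zero, zero_mul, zero_div, neg_zero]).symm
    _ = -(∑ α, starRingEnd ℂ (Ψ α) * H α β) / starRingEnd ℂ (Ψ β) := by
          simp only [hW, Finset.sum_neg_distrib, Finset.sum_div, neg_div]
    _ = 0 := by rw [hcolumn, neg_zero, zero_div]

/-- **Theorem 1, part 2 (conservation of classical probability).** For a frustration-free
Hamiltonian `H = ∑ i, P i` that is a sum of local classical projectors with ground state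
`Ψ`, every column of the transition-rate matrix `W α β = -conj (Ψ α) * H α β / conj (Ψ β)`
restricted to the support `A = {α | Ψ α ≠ 0}` sums to zero. -/
theorem frustration_free_probability_conservation
    {C : Type*} [Fintype C] [DecidableEq C]
    {ι : Type*} [Fintype ι]
    (S : ι → Set C) [∀ i, DecidablePred (· ∈ S i)] (ψ : ι → C → ℂ)
    (hsupp : ∀ i α, ψ i α ≠ 0 ↔ α ∈ S i)
    (hnorm : ∀ i, ∑ α, Complex.normSq (ψ i α) = 1)
    (P : ι → Matrix C C ℂ)
    (hP : ∀ i α β, P i α β =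
      (if α = β ∧ α ∈ S i then (1 : ℂ) else 0) - ψ i α * (starRingEnd ℂ) (ψ i β))
    (H : Matrix C C ℂ) (hH : H = ∑ i, P i)
    (Ψ : C → ℂ) (hΨ : ∀ i, (P i).mulVec Ψ = 0)
    (W : Matrix C C ℂ)
    (hW : ∀ α β, W α β = -((starRingEnd ℂ) (Ψ α) * H α β / (starRingEnd ℂ) (Ψ β))) :
    ∀ β : C, Ψ β ≠ 0 → ∑ α : {a : C // Ψ a ≠ 0}, W α.1 β = 0 :=
  frustration_free_probability_conservation_general S ψ P hP H hH Ψ hΨ W hW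
end

section
/- (Theorem 1, part 2: detailed balance.) Let H = Σ_{i∈ι} P_i be a frustration-free Hamiltonian that is a sum of local classical projectors with ground state Ψ, let A be the support of Ψ, and let W be the transition-rate matrix W(α,β) = −conj(Ψ(α))·H(α,β)/conj(Ψ(β)). Then W satisfies detailed balance with respect to the distribution p⁰(α) = |Ψ(α)|²: for all α, β ∈ A, W(α,β)·|Ψ(β)|² = W(β,α)·|Ψ(α)|². -/
/-!
Detailed balance says that `conj (Ψ α) * H α β * Ψ β` is symmetric in `α, β`, and it suffices
to check this for each projector `P i`. The ground-state equation `P i Ψ = 0` forces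
`Ψ = ⟨ψ i, Ψ⟩ • ψ i` on `S i`, so off the diagonal
`conj (Ψ α) * P i α β * Ψ β = -|ψ i α|² |ψ i β|² |⟨ψ i, Ψ⟩|²`, which is symmetric.
-/

open Matrix ComplexConjugate

section LocalClassicalProjector

variable {C : Type*} [Fintype C] [DecidableEq C] {S : Set C} [DecidablePred (· ∈ S)]
  {ψ Ψ : C → ℂ} {P : Matrix C C ℂ}

theorem conj_mul_eq_normSq_mul_of_mulVec_eq_zero (hψ : ∀ δ, ψ δ ≠ 0 → δ ∈ S)
    (hP : ∀ α β, P α β = (if α = β ∧ α ∈ S then (1 : ℂ) else 0) - ψ α * conj (ψ β))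
    (hΨ : P *ᵥ Ψ = 0) (δ : C) :
    conj (ψ δ) * Ψ δ = Complex.normSq (ψ δ) * (star ψ ⬝ᵥ Ψ) := by
  by_cases hδ : δ ∈ S
  · have h := congrFun hΨ δ
    simp only [mulVec, dotProduct, hP, sub_mul, Finset.sum_sub_distrib, ite_mul, one_mul,
      zero_mul, hδ, and_true, Finset.sum_ite_eq, Finset.mem_univ, if_true, mul_assoc,
      ← Finset.mul_sum, Pi.zero_apply, sub_eq_zero] at h
    rw [h, ← Complex.mul_conj, dotProduct]
    simp only [Pi.star_apply, RCLike.star_def]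
    ring
  · have hz : ψ δ = 0 := not_imp_comm.mp (hψ δ) hδ
    simp [hz]

theorem conj_mul_mul_comm_of_mulVec_eq_zero (hψ : ∀ δ, ψ δ ≠ 0 → δ ∈ S)
    (hP : ∀ α β, P α β = (if α = β ∧ α ∈ S then (1 : ℂ) else 0) - ψ α * conj (ψ β))
    (hΨ : P *ᵥ Ψ = 0) (α β : C) :
    conj (Ψ α) * P α β * Ψ β = conj (Ψ β) * P β α * Ψ α := by
  obtain rfl | hαβ := eq_or_ne α β
  · rfl
  have hw := conj_mul_eq_normSq_mul_of_mulVec_eq_zero hψ hP hΨ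
  have hwα := congrArg conj (hw α)
  simp only [map_mul, Complex.conj_conj, Complex.conj_ofReal] at hwα
  have hwβ := congrArg conj (hw β)
  simp only [map_mul, Complex.conj_conj, Complex.conj_ofReal] at hwβ
  calc conj (Ψ α) * P α β * Ψ β
      = -((ψ α * conj (Ψ α)) * (conj (ψ β) * Ψ β)) := by
        simp only [hP, hαβ, false_and, if_false]; ring
    _ = -((ψ β * conj (Ψ β)) * (conj (ψ α) * Ψ α)) := by rw [hwα, hw β, hwβ, hw α]; ring
    _ = conj (Ψ β) * P β α * Ψ α := by
        simp only [hP, hαβ.symm, false_and, if_false]; ring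

end LocalClassicalProjector

theorem div_conj_mul_normSq {b : ℂ} (x : ℂ) (hb : b ≠ 0) :
    x / conj b * (Complex.normSq b : ℂ) = x * b := by
  rw [← Complex.mul_conj, mul_comm b, ← mul_assoc, div_mul_cancel₀ _ ((map_ne_zero _).mpr hb)]

theorem frustration_free_detailed_balance_general
    {C : Type*} [Fintype C] [DecidableEq C]
    {ι : Type*} [Fintype ι]
    (S : ι → Set C) [∀ i, DecidablePred (· ∈ S i)] (ψ : ι → C → ℂ)
    (hsupp : ∀ i α, ψ i α ≠ 0 ↔ α ∈ S i)
    (P : ι → Matrix C C ℂ)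
    (hP : ∀ i α β, P i α β =
      (if α = β ∧ α ∈ S i then (1 : ℂ) else 0) - ψ i α * (starRingEnd ℂ) (ψ i β))
    (H : Matrix C C ℂ) (hH : H = ∑ i, P i)
    (Ψ : C → ℂ) (hΨ : ∀ i, (P i).mulVec Ψ = 0)
    (W : Matrix C C ℂ)
    (hW : ∀ α β, W α β = -((starRingEnd ℂ) (Ψ α) * H α β / (starRingEnd ℂ) (Ψ β))) :
    ∀ α β : C, Ψ α ≠ 0 → Ψ β ≠ 0 →
      W α β * (↑(Complex.normSq (Ψ β)) : ℂ) = W β α * (↑(Complex.normSq (Ψ α)) : ℂ) := by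
  intro α β hα hβ
  have hsymm : conj (Ψ α) * H α β * Ψ β = conj (Ψ β) * H β α * Ψ α := by
    simp only [hH, Matrix.sum_apply, Finset.mul_sum, Finset.sum_mul]
    exact Finset.sum_congr rfl fun i _ =>
      conj_mul_mul_comm_of_mulVec_eq_zero (fun δ => (hsupp i δ).mp) (hP i) (hΨ i) α β
  rw [hW, hW, neg_mul, neg_mul, div_conj_mul_normSq _ hβ, div_conj_mul_normSq _ hα, hsymm]

/-- **Theorem 1, part 2 (detailed balance).** For a frustration-free Hamiltonian
`H = ∑ i, P i` that is a sum of local classical projectors with ground state `Ψ`, the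
transition-rate matrix `W α β = -conj (Ψ α) * H α β / conj (Ψ β)` satisfies detailed
balance with respect to the equilibrium distribution `p⁰ α = |Ψ α|²` on the support of
`Ψ`. -/
theorem frustration_free_detailed_balance
    {C : Type*} [Fintype C] [DecidableEq C]
    {ι : Type*} [Fintype ι]
    (S : ι → Set C) [∀ i, DecidablePred (· ∈ S i)] (ψ : ι → C → ℂ)
    (hsupp : ∀ i α, ψ i α ≠ 0 ↔ α ∈ S i)
    (hnorm : ∀ i, ∑ α, Complex.normSq (ψ i α) = 1)
    (P : ι → Matrix C C ℂ)
    (hP : ∀ i α β, P i α β =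
      (if α = β ∧ α ∈ S i then (1 : ℂ) else 0) - ψ i α * (starRingEnd ℂ) (ψ i β))
    (H : Matrix C C ℂ) (hH : H = ∑ i, P i)
    (Ψ : C → ℂ) (hΨ : ∀ i, (P i).mulVec Ψ = 0)
    (W : Matrix C C ℂ)
    (hW : ∀ α β, W α β = -((starRingEnd ℂ) (Ψ α) * H α β / (starRingEnd ℂ) (Ψ β))) :
    ∀ α β : C, Ψ α ≠ 0 → Ψ β ≠ 0 →
      W α β * (↑(Complex.normSq (Ψ β)) : ℂ) = W β α * (↑(Complex.normSq (Ψ α)) : ℂ) :=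
  frustration_free_detailed_balance_general S ψ hsupp P hP H hH Ψ hΨ W hW
end

section
/- (Corollary 2: quantum–Markov correspondence for diagonal operators.) Let C be a finite type, H ∈ Matrix C C ℂ Hermitian, and Ψ : C → ℂ with Ψ(α) ≠ 0 for every α and H.mulVec Ψ = 0. Let W be the matrix W(α,β) = −conj(Ψ(α))·H(α,β)/conj(Ψ(β)) and p⁰(α) = |Ψ(α)|². Then for every n ≥ 1, every family of diagonal matrices O₁, …, Oₙ ∈ Matrix C C ℂ, and all real numbers τ₁, …, τₙ₋₁, the imaginary-time quantum correlator equals the classical Markov correlator: star(Ψ) ⬝ᵥ (Oₙ * exp(−τₙ₋₁ • H) * Oₙ₋₁ * ⋯ * O₂ * exp(−τ₁ • H) * O₁).mulVec Ψ = 𝟙 ⬝ᵥ (Oₙ * exp(τₙ₋₁ • W) * Oₙ₋₁ * ⋯ * O₂ * exp(τ₁ • W) * O₁).mulVec p⁰, where 𝟙 is the all-ones vector and exp is the matrix exponential. -/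
/-!
Conjugation by the diagonal matrix `D = diag(conj Ψ)` turns `-H` into the rate matrix `W`, so
`exp(τ • W) = D exp(-τ • H) D⁻¹`. Diagonal observables commute with `D`, hence the whole Markov
chain of operators is `D` times the imaginary-time chain times `D⁻¹`. At the boundaries `D`
is absorbed: `D Ψ = |Ψ|² = p⁰` on the right and `𝟙ᵀ D = (conj Ψ)ᵀ` on the left.
-/

open Matrix

/-- The alternating product `Oₙ * exp(−τₙ₋₁ • H) * Oₙ₋₁ * ⋯ * O₂ * exp(−τ₁ • H) * O₁`
appearing in imaginary-time quantum correlators. -/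
noncomputable def imagTimeChain {C : Type*} [Fintype C] [DecidableEq C]
    (H : Matrix C C ℂ) : (n : ℕ) → (Fin (n + 1) → Matrix C C ℂ) → (Fin n → ℝ) →
      Matrix C C ℂ
  | 0, O, _ => O 0
  | n + 1, O, τ =>
      O (Fin.last (n + 1)) * NormedSpace.exp ((-(τ (Fin.last n))) • H) *
        imagTimeChain H n (fun i => O i.castSucc) (fun i => τ i.castSucc)

/-- The alternating product `Oₙ * exp(τₙ₋₁ • W) * Oₙ₋₁ * ⋯ * O₂ * exp(τ₁ • W) * O₁`
appearing in classical Markov correlators. -/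
noncomputable def markovChain {C : Type*} [Fintype C] [DecidableEq C]
    (W : Matrix C C ℂ) : (n : ℕ) → (Fin (n + 1) → Matrix C C ℂ) → (Fin n → ℝ) →
      Matrix C C ℂ
  | 0, O, _ => O 0
  | n + 1, O, τ =>
      O (Fin.last (n + 1)) * NormedSpace.exp ((τ (Fin.last n)) • W) *
        markovChain W n (fun i => O i.castSucc) (fun i => τ i.castSucc)

namespace Matrix

section CommRing

variable {C α : Type*} [Fintype C] [DecidableEq C] [CommRing α]

theorem IsDiag.commute {A B : Matrix C C α} (hA : A.IsDiag) (hB : B.IsDiag) : Commute A B :=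
  hA.diagonal_diag ▸ hB.diagonal_diag ▸ commute_diagonal _ _

theorem mul_mul_nonsing_inv_of_commute {U A : Matrix C C α} (hU : IsUnit U) (h : Commute U A) :
    U * A * U⁻¹ = A := by
  rw [h.eq, mul_nonsing_inv_cancel_right _ _ ((isUnit_iff_isUnit_det U).mp hU)]

theorem eq_mul_mul_nonsing_inv_of_mul_eq {U A B : Matrix C C α} (hU : IsUnit U)
    (h : B * U = U * A) : B = U * A * U⁻¹ := by
  rw [← h, mul_nonsing_inv_cancel_right _ _ ((isUnit_iff_isUnit_det U).mp hU)]

theorem dotProduct_conj_mulVec_mulVec {U M : Matrix C C α} (hU : IsUnit U) (u v : C → α) :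
    u ⬝ᵥ (U * M * U⁻¹) *ᵥ (U *ᵥ v) = (u ᵥ* U) ⬝ᵥ M *ᵥ v := by
  rw [mulVec_mulVec, nonsing_inv_mul_cancel_right _ _ ((isUnit_iff_isUnit_det U).mp hU),
    ← mulVec_mulVec, dotProduct_mulVec]

end CommRing

end Matrix

section

variable {C : Type*} [Fintype C] [DecidableEq C]

theorem markovChain_eq_conj_imagTimeChain {U H W : Matrix C C ℂ} (hU : IsUnit U)
    (hW : W = U * (-H) * U⁻¹) (n : ℕ) (O : Fin (n + 1) → Matrix C C ℂ)
    (hO : ∀ k, Commute U (O k)) (τ : Fin n → ℝ) :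
    markovChain W n O τ = U * imagTimeChain H n O τ * U⁻¹ := by
  induction n with
  | zero => exact (mul_mul_nonsing_inv_of_commute hU (hO 0)).symm
  | succ n ih =>
    have hexp : NormedSpace.exp (τ (Fin.last n) • W) =
        U * NormedSpace.exp ((-τ (Fin.last n)) • H) * U⁻¹ := by
      rw [← exp_conj _ _ hU, hW, neg_smul, ← smul_neg, Matrix.mul_smul, Matrix.smul_mul]
    rw [markovChain, imagTimeChain, ih _ (fun k => hO k.castSucc), hexp]
    conv_lhs => rw [← mul_mul_nonsing_inv_of_commute hU (hO (Fin.last (n + 1)))]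
    simp only [Matrix.mul_assoc,
      nonsing_inv_mul_cancel_left _ _ ((isUnit_iff_isUnit_det U).mp hU)]

theorem mul_diagonal_star_eq_diagonal_star_mul_neg {H W : Matrix C C ℂ} {Ψ : C → ℂ}
    (hΨne : ∀ α, Ψ α ≠ 0)
    (hW : ∀ α β, W α β = -((starRingEnd ℂ) (Ψ α) * H α β / (starRingEnd ℂ) (Ψ β))) :
    W * diagonal (star Ψ) = diagonal (star Ψ) * -H := by
  ext α β
  have hβ : (starRingEnd ℂ) (Ψ β) ≠ 0 := (map_ne_zero _).mpr (hΨne β)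
  simp only [mul_diagonal, diagonal_mul, hW, Pi.star_apply, RCLike.star_def,
    Matrix.neg_apply, neg_mul, div_mul_cancel₀ _ hβ, mul_neg]

end

theorem diagonal_correlator_quantum_markov_general
    {C : Type*} [Fintype C] [DecidableEq C]
    (H : Matrix C C ℂ)
    (Ψ : C → ℂ) (hΨne : ∀ α, Ψ α ≠ 0)
    (W : Matrix C C ℂ)
    (hW : ∀ α β, W α β = -((starRingEnd ℂ) (Ψ α) * H α β / (starRingEnd ℂ) (Ψ β)))
    (p₀ : C → ℂ) (hp₀ : ∀ α, p₀ α = (↑(Complex.normSq (Ψ α)) : ℂ))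
    (n : ℕ) (O : Fin (n + 1) → Matrix C C ℂ) (hO : ∀ k, (O k).IsDiag)
    (τ : Fin n → ℝ) :
    star Ψ ⬝ᵥ (imagTimeChain H n O τ).mulVec Ψ =
      (fun _ => (1 : ℂ)) ⬝ᵥ (markovChain W n O τ).mulVec p₀ := by
  set D := diagonal (star Ψ)
  have hD : IsUnit D := isUnit_diagonal.mpr <| Pi.isUnit_iff.mpr fun α =>
    (star_ne_zero.mpr (hΨne α)).isUnit
  have hp : D *ᵥ Ψ = p₀ := funext fun α => by
    rw [mulVec_diagonal, hp₀, Complex.normSq_eq_conj_mul_self]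
    rfl
  have hone : (fun _ => (1 : ℂ)) ᵥ* D = star Ψ := funext fun α => by
    rw [vecMul_diagonal, one_mul]
  have hWD : W = D * (-H) * D⁻¹ :=
    eq_mul_mul_nonsing_inv_of_mul_eq hD (mul_diagonal_star_eq_diagonal_star_mul_neg hΨne hW)
  rw [markovChain_eq_conj_imagTimeChain hD hWD n O (fun k => (isDiag_diagonal _).commute (hO k)) τ,
    ← hp, dotProduct_conj_mulVec_mulVec hD, hone]

/-- **Corollary 2: quantum–Markov correspondence for diagonal operators.** For a Hermitian
`H` annihilating an everywhere-nonzero state `Ψ`, with transition-rate matrix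
`W α β = -conj (Ψ α) * H α β / conj (Ψ β)` and equilibrium distribution `p⁰ α = |Ψ α|²`,
every imaginary-time correlator of diagonal operators equals the corresponding classical
Markov correlator. -/
theorem diagonal_correlator_quantum_markov
    {C : Type*} [Fintype C] [DecidableEq C]
    (H : Matrix C C ℂ) (hH : H.IsHermitian)
    (Ψ : C → ℂ) (hΨne : ∀ α, Ψ α ≠ 0) (hΨ : H.mulVec Ψ = 0)
    (W : Matrix C C ℂ)
    (hW : ∀ α β, W α β = -((starRingEnd ℂ) (Ψ α) * H α β / (starRingEnd ℂ) (Ψ β)))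
    (p₀ : C → ℂ) (hp₀ : ∀ α, p₀ α = (↑(Complex.normSq (Ψ α)) : ℂ))
    (n : ℕ) (O : Fin (n + 1) → Matrix C C ℂ) (hO : ∀ k, (O k).IsDiag)
    (τ : Fin n → ℝ) :
    star Ψ ⬝ᵥ (imagTimeChain H n O τ).mulVec Ψ =
      (fun _ => (1 : ℂ)) ⬝ᵥ (markovChain W n O τ).mulVec p₀ :=
  diagonal_correlator_quantum_markov_general H Ψ hΨne W hW p₀ hp₀ n O hO τ
end

section
/- (Corollary 4: classical correspondence for off-diagonal operators.) Let C be a finite type, H ∈ Matrix C C ℂ Hermitian, and Ψ : C → ℂ with Ψ(α) ≠ 0 for every α and H.mulVec Ψ = 0. Let W be the matrix W(α,β) = −conj(Ψ(α))·H(α,β)/conj(Ψ(β)). Let O₁, O₂ ∈ Matrix C C ℂ be Hermitian and define the diagonal classical observables c₁, c₂ : C → ℂ by cᵢ(α) = (Oᵢ.mulVec Ψ)(α) / Ψ(α). Then for every τ ∈ ℝ, star(Ψ) ⬝ᵥ (O₁ * exp(−τ • H) * O₂).mulVec Ψ = Σ_{α,β} conj(c₁(α)) · (exp(τ • W))(α,β)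 · c₂(β) · |Ψ(β)|². That is, the imaginary-time two-point function of off-diagonal quantum operators equals a two-point function of diagonal observables in the classical Markov process. -/
/-!
Conjugating by the diagonal matrix `D = diag (conj Ψ)` turns `-τ • H` into `τ • W`, so
`exp (τ • W) α β = conj (Ψ α) * exp (-τ • H) α β / conj (Ψ β)`. Moving the Hermitian `O₁` onto
the bra, the quantum correlator is `∑ α β, conj ((O₁ Ψ) α) * exp (-τ • H) α β * (O₂ Ψ) β`, and
writing `(Oᵢ Ψ) α = cᵢ α * Ψ α` the factors of `Ψ` are exactly absorbed by `D`, `D⁻¹` and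
`|Ψ β|²`.
-/

open Matrix

namespace Matrix

variable {m n R : Type*} [Fintype m] [Fintype n]

theorem dotProduct_mulVec_eq_sum_sum [NonUnitalSemiring R] (u : m → R) (M : Matrix m n R)
    (v : n → R) : u ⬝ᵥ M *ᵥ v = ∑ i, ∑ j, u i * M i j * v j := by
  simp only [dotProduct, mulVec, Finset.mul_sum, mul_assoc]

theorem IsHermitian.star_dotProduct_mul_mulVec [CommSemiring R] [StarRing R]
    {A : Matrix n n R} (hA : A.IsHermitian) (B : Matrix n m R) (v : n → R) (w : m → R) :
    star v ⬝ᵥ (A * B) *ᵥ w = star (A *ᵥ v) ⬝ᵥ B *ᵥ w := by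
  rw [← mulVec_mulVec, dotProduct_mulVec, star_mulVec, hA.eq]

theorem exp_apply_of_diagonal_similar {𝕜 : Type*} [NormedField 𝕜] [NormedAlgebra ℚ 𝕜]
    [CompleteSpace 𝕜] [DecidableEq m] (d : m → 𝕜) (hd : ∀ i, d i ≠ 0) {A B : Matrix m m 𝕜}
    (hB : ∀ i j, B i j = d i * A i j / d j) (i j : m) :
    NormedSpace.exp B i j = d i * NormedSpace.exp A i j / d j := by
  have hinv : (diagonal d)⁻¹ = diagonal d⁻¹ :=
    inv_eq_right_inv <| by
      rw [diagonal_mul_diagonal, ← diagonal_one]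
      exact congrArg diagonal (funext fun k => mul_inv_cancel₀ (hd k))
  have hunit : IsUnit (diagonal d) :=
    (isUnit_iff_isUnit_det _).mpr <| by
      simpa [det_diagonal, Finset.prod_ne_zero_iff] using hd
  have hsimilar : B = diagonal d * A * (diagonal d)⁻¹ := by
    ext k l
    simp [hinv, hB, div_eq_mul_inv]
  rw [hsimilar, exp_conj _ _ hunit, hinv]
  simp [div_eq_mul_inv]

end Matrix

theorem offdiagonal_correlator_quantum_markov_general
    {C : Type*} [Fintype C] [DecidableEq C]
    (H : Matrix C C ℂ)
    (Ψ : C → ℂ) (hΨne : ∀ α, Ψ α ≠ 0)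
    (W : Matrix C C ℂ)
    (hW : ∀ α β, W α β = -((starRingEnd ℂ) (Ψ α) * H α β / (starRingEnd ℂ) (Ψ β)))
    (O₁ O₂ : Matrix C C ℂ) (hO₁ : O₁.IsHermitian)
    (c₁ c₂ : C → ℂ)
    (hc₁ : ∀ α, c₁ α = (O₁.mulVec Ψ) α / Ψ α)
    (hc₂ : ∀ α, c₂ α = (O₂.mulVec Ψ) α / Ψ α)
    (τ : ℝ) :
    star Ψ ⬝ᵥ (O₁ * NormedSpace.exp ((-τ) • H) * O₂).mulVec Ψ =
      ∑ α, ∑ β, (starRingEnd ℂ) (c₁ α) * (NormedSpace.exp (τ • W)) α β * c₂ β *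
        (↑(Complex.normSq (Ψ β)) : ℂ) := by
  have hconj : ∀ α, (starRingEnd ℂ) (Ψ α) ≠ 0 := fun α => by simpa using hΨne α
  have hexp := exp_apply_of_diagonal_similar (fun α => (starRingEnd ℂ) (Ψ α)) hconj
    (A := (-τ) • H) (B := τ • W) fun α β => by
      simp only [Matrix.smul_apply, hW, smul_neg, Complex.real_smul, neg_smul, mul_neg]
      ring
  rw [mul_assoc, hO₁.star_dotProduct_mul_mulVec, ← mulVec_mulVec, dotProduct_mulVec_eq_sum_sum]
  refine Finset.sum_congr rfl fun α _ => Finset.sum_congr rfl fun β _ => ?_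
  rw [hexp, hc₁, hc₂, ← Complex.mul_conj, map_div₀, Pi.star_apply, Complex.star_def]
  field_simp [hΨne α, hΨne β, hconj α, hconj β]

/-- **Corollary 4: classical correspondence for off-diagonal operators.** For a Hermitian
`H` annihilating an everywhere-nonzero state `Ψ`, with transition-rate matrix
`W α β = -conj (Ψ α) * H α β / conj (Ψ β)`, the imaginary-time two-point function of two
Hermitian (possibly off-diagonal) operators `O₁, O₂` equals the classical Markov two-point
function of the diagonal observables `cᵢ α = (Oᵢ.mulVec Ψ) α / Ψ α` in the equilibrium
distribution `p⁰ α = |Ψ α|²`. -/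
theorem offdiagonal_correlator_quantum_markov
    {C : Type*} [Fintype C] [DecidableEq C]
    (H : Matrix C C ℂ) (hH : H.IsHermitian)
    (Ψ : C → ℂ) (hΨne : ∀ α, Ψ α ≠ 0) (hΨ : H.mulVec Ψ = 0)
    (W : Matrix C C ℂ)
    (hW : ∀ α β, W α β = -((starRingEnd ℂ) (Ψ α) * H α β / (starRingEnd ℂ) (Ψ β)))
    (O₁ O₂ : Matrix C C ℂ) (hO₁ : O₁.IsHermitian) (hO₂ : O₂.IsHermitian)
    (c₁ c₂ : C → ℂ)
    (hc₁ : ∀ α, c₁ α = (O₁.mulVec Ψ) α / Ψ α)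
    (hc₂ : ∀ α, c₂ α = (O₂.mulVec Ψ) α / Ψ α)
    (τ : ℝ) :
    star Ψ ⬝ᵥ (O₁ * NormedSpace.exp ((-τ) • H) * O₂).mulVec Ψ =
      ∑ α, ∑ β, (starRingEnd ℂ) (c₁ α) * (NormedSpace.exp (τ • W)) α β * c₂ β *
        (↑(Complex.normSq (Ψ β)) : ℂ) :=
  offdiagonal_correlator_quantum_markov_general H Ψ hΨne W hW O₁ O₂ hO₁ c₁ c₂ hc₁ hc₂ τ
end

section
/- (Vanishing of correlators of hidden operators.) Let A and B be finite types, Ψ : A × B → ℂ, and let ρ ∈ Matrix A A ℂ be the reduced density matrix ρ(a,a') = Σ_{b ∈ B} Ψ(a,b)·conj(Ψ(a',b)). Suppose u : A → ℂ satisfies ρ.mulVec u = 0. Then for every φ : A → ℂ and every X ∈ Matrix B B ℂ, the hidden operator M ∈ Matrix (A × B) (A × B) ℂ with entries M((a,b),(a',b')) = φ(a)·conj(u(a'))·X(b,b') annihilates Ψ: M.mulVec Ψ = 0. Consequently, for every N ∈ Matrix (A × B) (A × B) ℂ, the correlator star(Ψ) ⬝ᵥ (N * M).mulVec Ψ = 0;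 in particular all equal-time correlation functions of the hidden operator |φ⟩⟨u| with operators supported outside A vanish. -/
/-!
Write `Ψ = vec Pᵀ` for the `A × B` coefficient matrix `P a b = Ψ (a, b)`, so that `ρ = P * Pᴴ`.
Since `ker (P * Pᴴ) = ker Pᴴ`, the hypothesis `ρ *ᵥ u = 0` says `star u ᵥ* P = 0`. The hidden
operator is the Kronecker product `|φ⟩⟨u| ⊗ₖ X`, and it acts on `vec Pᵀ` as
`vec (X * Pᵀ * (|φ⟩⟨u|)ᵀ)`, whose middle factor `Pᵀ *ᵥ star u = star u ᵥ* P` vanishes.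
-/

open Matrix Kronecker

namespace Matrix

variable {m n p : Type*} [Fintype m] [Fintype n]

theorem star_vecMul_eq_zero_of_mul_conjTranspose_mulVec_eq_zero
    {R : Type*} [CommRing R] [PartialOrder R] [StarRing R] [StarOrderedRing R] [NoZeroDivisors R]
    {P : Matrix m n R} {u : m → R} (h : (P * Pᴴ) *ᵥ u = 0) : star u ᵥ* P = 0 := by
  rw [self_mul_conjTranspose_mulVec_eq_zero] at h
  simpa [star_mulVec] using congrArg star h

theorem kronecker_vecMulVec_mulVec_vec_transpose_eq_zero {R : Type*} [CommSemiring R]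
    (φ : p → R) {w : m → R} (X : Matrix n n R) {P : Matrix m n R} (h : w ᵥ* P = 0) :
    (vecMulVec φ w ⊗ₖ X) *ᵥ vec Pᵀ = 0 := by
  rw [kronecker_mulVec_vec, transpose_vecMulVec, Matrix.mul_assoc, mul_vecMulVec,
    mulVec_transpose, h, zero_vecMulVec, Matrix.mul_zero, vec_zero]

end Matrix

theorem hidden_operator_correlators_vanish_general
    {A B : Type*} [Fintype A] [Fintype B]
    (Ψ : A × B → ℂ)
    (ρ : Matrix A A ℂ)
    (hρ : ∀ a a', ρ a a' = ∑ b, Ψ (a, b) * (starRingEnd ℂ) (Ψ (a', b)))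
    (u : A → ℂ) (hu : ρ.mulVec u = 0)
    (φ : A → ℂ) (X : Matrix B B ℂ)
    (M : Matrix (A × B) (A × B) ℂ)
    (hM : ∀ a b a' b', M (a, b) (a', b') = φ a * (starRingEnd ℂ) (u a') * X b b') :
    M.mulVec Ψ = 0 ∧
      ∀ N : Matrix (A × B) (A × B) ℂ, star Ψ ⬝ᵥ (N * M).mulVec Ψ = 0 := by
  set P : Matrix A B ℂ := of (Function.curry Ψ)
  have hρP : ρ = P * Pᴴ := by
    ext a a'
    simp [hρ, P, mul_apply]
  have hMkron : M = vecMulVec φ (star u) ⊗ₖ X := by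
    ext ⟨a, b⟩ ⟨a', b'⟩
    simp [hM, vecMulVec_apply]
  have hΨ : Ψ = vec Pᵀ := rfl
  have hMΨ : M *ᵥ Ψ = 0 := by
    rw [hMkron, hΨ]
    open scoped ComplexOrder in
    exact kronecker_vecMulVec_mulVec_vec_transpose_eq_zero φ X
      (star_vecMul_eq_zero_of_mul_conjTranspose_mulVec_eq_zero (hρP ▸ hu))
  refine ⟨hMΨ, fun N => ?_⟩
  rw [← mulVec_mulVec, hMΨ, mulVec_zero, dotProduct_zero]

/-- **Vanishing of correlators of hidden operators.** If the reduced density matrix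
`ρ a a' = ∑ b, Ψ (a,b) * conj (Ψ (a',b))` annihilates `u`, then every hidden operator
`M ((a,b),(a',b')) = φ a * conj (u a') * X b b'` annihilates the state `Ψ`, and hence
all its equal-time correlators with arbitrary operators `N` vanish. -/
theorem hidden_operator_correlators_vanish
    {A B : Type*} [Fintype A] [Fintype B] [DecidableEq A] [DecidableEq B]
    (Ψ : A × B → ℂ)
    (ρ : Matrix A A ℂ)
    (hρ : ∀ a a', ρ a a' = ∑ b, Ψ (a, b) * (starRingEnd ℂ) (Ψ (a', b)))
    (u : A → ℂ) (hu : ρ.mulVec u = 0)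
    (φ : A → ℂ) (X : Matrix B B ℂ)
    (M : Matrix (A × B) (A × B) ℂ)
    (hM : ∀ a b a' b', M (a, b) (a', b') = φ a * (starRingEnd ℂ) (u a') * X b b') :
    M.mulVec Ψ = 0 ∧
      ∀ N : Matrix (A × B) (A × B) ℂ, star Ψ ⬝ᵥ (N * M).mulVec Ψ = 0 :=
  hidden_operator_correlators_vanish_general Ψ ρ hρ u hu φ X M hM
end

section
/- (The Jones–Wenzl state spans the kernel at d = √2.) Let M₃(√2) be the 5 × 5 real (or complex) matrix with rows [d³, d, d², d², d²], [d, d³, d², d², d²], [d², d², d³, d, d], [d², d², d, d³, d], [d², d², d, d, d³] evaluated at d = √2, and let v be the vector (√2, √2, −1, −1, −1). Then M₃(√2).mulVec v = 0, and every vector w with M₃(√2).mulVec w = 0 is a scalar multiple of v; that is, the kernel of M₃ at d = √2 is one-dimensional and is spanned by the Jones–Wenzl state √2(|α₁⟩ + |α₂⟩) − (|β₁⟩ + |β₂⟩ + |β₃⟩). -/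
open Matrix

/-- The three-strand connectivity (Gram) matrix `M³` of the loop model: rows and columns
are indexed by the five non-crossing perfect matchings of six boundary points (first the
two matchings `α₁, α₂`, then the three matchings `β₁, β₂, β₃`), and the `(α,β)` entry is
`d` raised to the number of closed loops formed by gluing matching `α` to matching `β`. -/
def M3 (d : ℂ) : Matrix (Fin 5) (Fin 5) ℂ :=
  !![d^3, d,   d^2, d^2, d^2;
     d,   d^3, d^2, d^2, d^2;
     d^2, d^2, d^3, d,   d;
     d^2, d^2, d,   d^3, d;
     d^2, d^2, d,   d,   d^3]

/-! `M₃(d) = (d³ - d) I + d J + d² K`, where `J` is the all-ones matrix on each of the two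
diagonal blocks and `K` the all-ones matrix off them. Subtracting two rows of the same block
therefore shows that, as soon as `d³ ≠ d`, a kernel vector is constant on each block:
`w = (a, a, b, b, b)`. At `d² = 2` a single remaining row equation reads `4a + 4db = 0`, which
forces `w = -b · (d, d, -1, -1, -1)`. -/

namespace M3

variable {d : ℂ} {w : Fin 5 → ℂ}

theorem mulVec_eq (d : ℂ) (w : Fin 5 → ℂ) :
    M3 d *ᵥ w = ![d ^ 3 * w 0 + d * w 1 + d ^ 2 * (w 2 + w 3 + w 4),
                  d * w 0 + d ^ 3 * w 1 + d ^ 2 * (w 2 + w 3 + w 4),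
                  d ^ 2 * (w 0 + w 1) + d ^ 3 * w 2 + d * (w 3 + w 4),
                  d ^ 2 * (w 0 + w 1) + d ^ 3 * w 3 + d * (w 2 + w 4),
                  d ^ 2 * (w 0 + w 1) + d ^ 3 * w 4 + d * (w 2 + w 3)] := by
  ext i
  fin_cases i <;> simp [M3, mulVec, dotProduct, Fin.sum_univ_five] <;> ring

theorem blockwise_const_of_mulVec_eq_zero (hd : d ^ 3 ≠ d) (hw : M3 d *ᵥ w = 0) :
    w 1 = w 0 ∧ w 3 = w 2 ∧ w 4 = w 2 := by
  rw [mulVec_eq] at hw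
  have row0 := congrFun hw 0
  have row1 := congrFun hw 1
  have row2 := congrFun hw 2
  have row3 := congrFun hw 3
  have row4 := congrFun hw 4
  simp only [Fin.isValue, cons_val, Pi.zero_apply] at row0 row1 row2 row3 row4
  have hd' : d ^ 3 - d ≠ 0 := sub_ne_zero.2 hd
  refine ⟨?_, ?_, ?_⟩ <;> apply mul_left_cancel₀ hd'
  · linear_combination row1 - row0
  · linear_combination row3 - row2
  · linear_combination row4 - row2

theorem mulVec_jonesWenzl (hd : d ^ 2 = 2) : M3 d *ᵥ ![d, d, -1, -1, -1] = 0 := by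
  rw [mulVec_eq]
  ext i
  fin_cases i <;> simp <;>
    first | linear_combination d ^ 2 * hd | linear_combination d * hd

theorem mulVec_eq_zero_iff (hd : d ^ 2 = 2) :
    M3 d *ᵥ w = 0 ↔ ∃ c : ℂ, w = c • ![d, d, -1, -1, -1] := by
  refine ⟨fun hw => ?_, fun ⟨c, hc⟩ => by rw [hc, mulVec_smul, mulVec_jonesWenzl hd, smul_zero]⟩
  have hd3 : d ^ 3 = 2 * d := by linear_combination d * hd
  have hd0 : d ≠ 0 := by rintro rfl; norm_num at hd
  obtain ⟨h1, h3, h4⟩ :=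
    blockwise_const_of_mulVec_eq_zero (by rw [hd3, two_mul]; simpa using hd0) hw
  have row2 := congrFun hw 2
  simp only [mulVec_eq, Fin.isValue, cons_val, Pi.zero_apply] at row2
  rw [h1, h3, h4, hd, hd3] at row2
  refine ⟨-w 2, ?_⟩
  ext i
  fin_cases i <;> simp [h1, h3, h4] <;> linear_combination row2 / 4

end M3

/-- **The Jones–Wenzl state spans the kernel of `M₃` at `d = √2`.** The vector
`v = (√2, √2, −1, −1, −1)`, i.e. the Jones–Wenzl state
`√2(|α₁⟩ + |α₂⟩) − (|β₁⟩ + |β₂⟩ + |β₃⟩)`, is annihilated by `M₃(√2)`, and every vector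
annihilated by `M₃(√2)` is a scalar multiple of `v`. -/
theorem kernel_M3_sqrt_two_is_JW :
    (M3 (Real.sqrt 2 : ℂ)).mulVec
        ![(Real.sqrt 2 : ℂ), (Real.sqrt 2 : ℂ), -1, -1, -1] = 0 ∧
      ∀ w : Fin 5 → ℂ, (M3 (Real.sqrt 2 : ℂ)).mulVec w = 0 →
        ∃ c : ℂ, w = c • ![(Real.sqrt 2 : ℂ), (Real.sqrt 2 : ℂ), -1, -1, -1] := by
  have hsq : (Real.sqrt 2 : ℂ) ^ 2 = 2 := by
    exact_mod_cast Real.sq_sqrt (zero_le_two : (0 : ℝ) ≤ 2)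
  exact ⟨M3.mulVec_jonesWenzl hsq, fun w => (M3.mulVec_eq_zero_iff hsq).1⟩
end

section
/- (The parity–cube-root solutions of the Jones–Wenzl winding constraints.) Let ω ∈ ℂ satisfy ω² + ω + 1 = 0. Define g : ℤ → ℤ → ℂ by: g a b = 1 if a and b are both odd; g a b = ω if a is even and b is odd; g a b = ω² if a is odd and b is even; g a b = 0 if a and b are both even. Then for all integers m, n, r, s with m·s − n·r = 1, one has g (m + r) (n + s) + g m n + g r s = 0. (Consequently ψ(2m,2n) := g m n, ψ(0,0) := 0 solves the (even, even)-sector Jones–Wenzl constraint.) -/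
/-!
The values of `g` depend only on the residues of its arguments mod 2, and vanish exactly on
`(0, 0)`. Reducing `m·s − n·r = 1` mod 2 says that `(m, n)` and `(r, s)` form a basis of
`(ZMod 2)²`, so `(m, n)`, `(r, s)` and `(m + r, n + s)` are its three nonzero vectors, on which
`g` takes the values `1`, `ω`, `ω²` once each.
-/

section

variable {R : Type*} [Semiring R]

def parityWeight (ω : R) (x y : ZMod 2) : R :=
  if x = 0 then (if y = 0 then 0 else ω) else (if y = 0 then ω ^ 2 else 1)

theorem parityWeight_add_add (ω : R) {x y u v : ZMod 2} (h : x * v - y * u = 1) :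
    parityWeight ω (x + u) (y + v) + parityWeight ω x y + parityWeight ω u v = ω ^ 2 + ω + 1 := by
  have zero_or_one : ∀ z : ZMod 2, z = 0 ∨ z = 1 := by decide
  rcases zero_or_one x with rfl | rfl <;> rcases zero_or_one y with rfl | rfl <;>
    rcases zero_or_one u with rfl | rfl <;> rcases zero_or_one v with rfl | rfl <;>
    simp +decide [parityWeight] at h ⊢ <;> abel

theorem eq_parityWeight_intCast {ω : R} {g : ℤ → ℤ → R}
    (hoo : ∀ a b : ℤ, Odd a → Odd b → g a b = 1)
    (heo : ∀ a b : ℤ, Even a → Odd b → g a b = ω)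
    (hoe : ∀ a b : ℤ, Odd a → Even b → g a b = ω ^ 2)
    (hee : ∀ a b : ℤ, Even a → Even b → g a b = 0) (a b : ℤ) :
    g a b = parityWeight ω a b := by
  by_cases ha : Even a <;> by_cases hb : Even b <;>
    simp [parityWeight, ZMod.intCast_eq_zero_iff_even, ← Int.not_even_iff_odd, ha, hb,
      hoo, heo, hoe, hee]

end

/-- **The parity–cube-root solutions of the Jones–Wenzl winding constraints.** Let `ω` be
a primitive cube root of unity (`ω² + ω + 1 = 0`) and let `g : ℤ → ℤ → ℂ` take the values
`1, ω, ω², 0` on the parity classes (odd, odd), (even, odd), (odd, even), (even, even)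
respectively.  Then for all integers `m, n, r, s` with `m·s − n·r = 1`,
`g (m+r) (n+s) + g m n + g r s = 0`; hence `ψ(2m,2n) := g m n`, `ψ(0,0) := 0` solves the
(even, even)-sector Jones–Wenzl constraint on the torus. -/
theorem parity_cube_root_solution
    (ω : ℂ) (hω : ω ^ 2 + ω + 1 = 0)
    (g : ℤ → ℤ → ℂ)
    (hoo : ∀ a b : ℤ, Odd a → Odd b → g a b = 1)
    (heo : ∀ a b : ℤ, Even a → Odd b → g a b = ω)
    (hoe : ∀ a b : ℤ, Odd a → Even b → g a b = ω ^ 2)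
    (hee : ∀ a b : ℤ, Even a → Even b → g a b = 0) :
    ∀ m n r s : ℤ, m * s - n * r = 1 →
      g (m + r) (n + s) + g m n + g r s = 0 := by
  intro m n r s h
  have hdet : (m : ZMod 2) * s - n * r = 1 := by
    exact_mod_cast congrArg (Int.cast : ℤ → ZMod 2) h
  simp only [eq_parityWeight_intCast hoo heo hoe hee, Int.cast_add]
  rw [parityWeight_add_add ω hdet, hω]
end

section
/- (Determinacy of (even, even)-sector zero-energy states.) Let f : ℤ → ℤ → ℂ satisfy: (i) f (−a) (−b) = f a b for all integers a, b; (ii) for all integers m, n, r, s with m·s − n·r = 1, f (m + r) (n + s) + f m n + f r s = 0; and (iii) f 1 0 = 0 and f 0 1 = 0. Then f a b = 0 for every coprime pair of integers (a, b) (i.e. whenever Int.gcd a b = 1). In other words, a solution of the homogeneous Jones–Wenzl winding constraints is determined on all primitive winding vectors by its values at (1,0) and (0,1). -/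
/-!
Every primitive vector `(a, b)` of the open first quadrant is the sum `p + q` of its two Farey
parents, primitive vectors of the closed first quadrant with `det (p, q) = 1` and strictly
smaller coordinate sums, so the constraint `f (p + q) + f p + f q = 0` propagates the zeros at
`(1, 0)` and `(0, 1)` down the Stern–Brocot tree to the whole quadrant. The rotation
`(x, y) ↦ (y, -x)` preserves the constraints and, by evenness, the two seeds; it carries the
result to the fourth quadrant, and evenness covers the other half-plane.
-/

/-- The homogeneous Jones–Wenzl constraint `f (v + w) + f v + f w = 0` on positively oriented
bases `(v, w)` of `ℤ²`. -/
def JWRelation {M : Type*} [AddMonoid M] (f : ℤ → ℤ → M) : Prop :=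
  ∀ m n r s : ℤ, m * s - n * r = 1 → f (m + r) (n + s) + f m n + f r s = 0

lemma exists_farey_parent {a b : ℤ} (ha : 0 < a) (hb : 0 < b) (hab : IsCoprime a b) :
    ∃ u v : ℤ, 0 ≤ u ∧ u < a ∧ 0 < v ∧ v ≤ b ∧ a * v - b * u = 1 := by
  obtain ⟨x, y, hxy⟩ := hab
  have hdiv := Int.emod_add_mul_ediv (-y) a
  refine ⟨(-y) % a, x - b * ((-y) / a), Int.emod_nonneg _ ha.ne', Int.emod_lt_of_pos _ ha,
    ?_, ?_, by linear_combination hxy - b * hdiv⟩ <;>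
  nlinarith [Int.emod_nonneg (-y) ha.ne', Int.emod_lt_of_pos (-y) ha]

namespace JWRelation

variable {M : Type*} [AddMonoid M] {f : ℤ → ℤ → M}

lemma rotate (hf : JWRelation f) : JWRelation fun x y => f y (-x) := by
  intro m n r s h
  simpa only [neg_add] using hf n (-m) s (-r) (by linear_combination h)

theorem eq_zero_of_nonneg (hf : JWRelation f) (h10 : f 1 0 = 0) (h01 : f 0 1 = 0)
    {a b : ℤ} (ha : 0 ≤ a) (hb : 0 ≤ b) (hab : IsCoprime a b) : f a b = 0 := by
  rcases ha.eq_or_lt with rfl | ha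
  · obtain rfl : b = 1 := by
      rcases Int.isUnit_iff.mp (isCoprime_zero_left.mp hab) with rfl | rfl <;> omega
    exact h01
  rcases hb.eq_or_lt with rfl | hb
  · obtain rfl : a = 1 := by
      rcases Int.isUnit_iff.mp (isCoprime_zero_right.mp hab) with rfl | rfl <;> omega
    exact h10
  obtain ⟨u, v, hu, hua, hv, hvb, huv⟩ := exists_farey_parent ha hb hab
  have hleft : f (a - u) (b - v) = 0 :=
    hf.eq_zero_of_nonneg h10 h01 (by omega) (by omega) ⟨v, -u, by linear_combination huv⟩
  have hright : f u v = 0 :=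
    hf.eq_zero_of_nonneg h10 h01 hu hv.le ⟨-b, a, by linear_combination huv⟩
  simpa [hleft, hright] using hf (a - u) (b - v) u v (by linear_combination huv)
termination_by (a + b).toNat
decreasing_by all_goals omega

theorem eq_zero_of_nonneg_left (hf : JWRelation f) (heven : ∀ a b : ℤ, f (-a) (-b) = f a b)
    (h10 : f 1 0 = 0) (h01 : f 0 1 = 0) {a b : ℤ} (ha : 0 ≤ a) (hab : IsCoprime a b) :
    f a b = 0 := by
  rcases le_total 0 b with hb | hb
  · exact hf.eq_zero_of_nonneg h10 h01 ha hb hab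
  · have h0m1 : f 0 (-1) = 0 := by simpa [h01] using heven 0 1
    simpa using hf.rotate.eq_zero_of_nonneg h0m1 h10 (neg_nonneg.mpr hb) ha hab.symm.neg_left

end JWRelation

/-- **Determinacy of (even, even)-sector zero-energy states.** A solution
`f : ℤ → ℤ → ℂ` of the homogeneous Jones–Wenzl winding constraints — even under
`(a,b) ↦ (−a,−b)` and satisfying `f(m+r, n+s) + f(m,n) + f(r,s) = 0` whenever
`m·s − n·r = 1` — that vanishes at `(1,0)` and `(0,1)` vanishes on every primitive
(coprime) winding vector. -/
theorem JW_constraints_determined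
    (f : ℤ → ℤ → ℂ)
    (heven : ∀ a b : ℤ, f (-a) (-b) = f a b)
    (hJW : ∀ m n r s : ℤ, m * s - n * r = 1 →
      f (m + r) (n + s) + f m n + f r s = 0)
    (h10 : f 1 0 = 0) (h01 : f 0 1 = 0) :
    ∀ a b : ℤ, Int.gcd a b = 1 → f a b = 0 := by
  intro a b hab
  have hf : JWRelation f := hJW
  have hcop : IsCoprime a b := Int.isCoprime_iff_gcd_eq_one.mpr hab
  rcases le_total 0 a with ha | ha
  · exact hf.eq_zero_of_nonneg_left heven h10 h01 ha hcop
  · rw [← heven]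
    exact hf.eq_zero_of_nonneg_left heven h10 h01 (neg_nonneg.mpr ha) hcop.neg_neg
end

section
/- (The ground-state degeneracy in the (even, even) sector is three.) Let P := {(a, b) : ℤ × ℤ | Int.gcd a b = 1} be the set of primitive vectors, and let V be the ℂ-subspace of ℂ × (P → ℂ) consisting of pairs (z, f) such that f(−a, −b) = f(a, b) for all (a, b) ∈ P, and f(m + r, n + s) + f(m, n) + f(r, s) = 2·z for all integers m, n, r, s with m·s − n·r = 1 (note that (m,n), (r,s) and (m+r, n+s) then lie in P). Then the ℂ-linear map V → ℂ³ sending (z, f) to (z, f(1,0), f(0,1)) is bijective; in particular V has dimension 3 over ℂ, so the space of zero-energy torus states of the Jones–Wenzl loop model in the (even, even) winding sector is exactly three-dimensional. -/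
/-- Primitive winding vectors on the torus: coprime pairs of integers. -/
def PrimVec : Type := {p : ℤ × ℤ // Int.gcd p.1 p.2 = 1}

lemma prim_neg {a b : ℤ} (h : Int.gcd a b = 1) : Int.gcd (-a) (-b) = 1 := by
  simpa [Int.gcd] using h

lemma prim_fst {m n r s : ℤ} (h : m * s - n * r = 1) : Int.gcd m n = 1 :=
  Int.isCoprime_iff_gcd_eq_one.mp ⟨s, -r, by linarith [h]⟩

lemma prim_snd {m n r s : ℤ} (h : m * s - n * r = 1) : Int.gcd r s = 1 :=
  Int.isCoprime_iff_gcd_eq_one.mp ⟨-n, m, by linarith [h]⟩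

lemma prim_add {m n r s : ℤ} (h : m * s - n * r = 1) : Int.gcd (m + r) (n + s) = 1 :=
  Int.isCoprime_iff_gcd_eq_one.mp ⟨s, -r, by ring_nf; linarith [h]⟩

lemma prim10 : Int.gcd (1 : ℤ) (0 : ℤ) = 1 := rfl
lemma prim01 : Int.gcd (0 : ℤ) (1 : ℤ) = 1 := rfl

/-- The space of zero-energy torus states of the Jones–Wenzl loop model in the
(even, even) winding sector: pairs `(z, f)` of the amplitude `z = ψ(0,0)` and the
amplitudes `f(m,n) = ψ(2m,2n)` on primitive vectors, even under negation and satisfying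
the Jones–Wenzl winding constraint `f(m+r,n+s) + f(m,n) + f(r,s) = 2z` whenever
`m·s − n·r = 1`. -/
noncomputable def JWSpace : Submodule ℂ (ℂ × (PrimVec → ℂ)) where
  carrier := {w |
    (∀ p : PrimVec, w.2 ⟨(-p.1.1, -p.1.2), prim_neg p.2⟩ = w.2 p) ∧
    (∀ m n r s : ℤ, ∀ h : m * s - n * r = 1,
      w.2 ⟨(m + r, n + s), prim_add h⟩ + w.2 ⟨(m, n), prim_fst h⟩ +
        w.2 ⟨(r, s), prim_snd h⟩ = 2 * w.1)}
  add_mem' := by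
    rintro a b ⟨ha1, ha2⟩ ⟨hb1, hb2⟩
    refine ⟨fun p => ?_, fun m n r s h => ?_⟩
    · simp only [Set.mem_setOf_eq, Prod.snd_add, Pi.add_apply]
      show a.2 _ + b.2 _ = a.2 p + b.2 p
      rw [ha1 p, hb1 p]
    · simp only [Set.mem_setOf_eq, Prod.snd_add, Prod.fst_add, Pi.add_apply]
      show a.2 _ + b.2 _ + (a.2 _ + b.2 _) + (a.2 _ + b.2 _) = 2 * (a.1 + b.1)
      linear_combination ha2 m n r s h + hb2 m n r s h
  zero_mem' := by
    refine ⟨fun p => rfl, fun m n r s h => ?_⟩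
    simp only [Set.mem_setOf_eq, Prod.snd_zero, Prod.fst_zero, Pi.zero_apply]
    show (0 : ℂ) + 0 + 0 = 2 * 0
    ring
  smul_mem' := by
    rintro c a ⟨ha1, ha2⟩
    refine ⟨fun p => ?_, fun m n r s h => ?_⟩
    · simp only [Set.mem_setOf_eq, Prod.smul_snd, Pi.smul_apply]
      show c • a.2 _ = c • a.2 p
      rw [ha1 p]
    · simp only [Set.mem_setOf_eq, Prod.smul_snd, Prod.smul_fst, Pi.smul_apply,
        smul_eq_mul]
      show c * a.2 _ + c * a.2 _ + c * a.2 _ = 2 * (c * a.1)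
      linear_combination c * ha2 m n r s h

/-- The evaluation map `(z, f) ↦ (z, f(1,0), f(0,1))`. -/
noncomputable def evalJW : JWSpace →ₗ[ℂ] ℂ × ℂ × ℂ where
  toFun v := (v.1.1, v.1.2 ⟨(1, 0), prim10⟩, v.1.2 ⟨(0, 1), prim01⟩)
  map_add' v w := rfl
  map_smul' c v := rfl

/-!
Uniqueness: if `(0, f)` is a state with `f(1,0) = f(0,1) = 0`, then `f` extended by zero to `ℤ²`
is an even function `F` with `F(u + v) = -F(u) - F(v)` whenever `det(u, v) = 1`. The set of
`g ∈ SL(2,ℤ)` whose two columns `F` kills contains `1` and is stable under right multiplication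
by `S^{±1}` (evenness) and `T^{±1}` (the constraint), so it is all of `SL(2,ℤ)`; and every
primitive vector is the first column of some `g ∈ SL(2,ℤ)`.

Existence: if `det(u, v) = 1` then `u`, `v`, `u + v` reduce mod 2 to the three nonzero vectors
of `(ZMod 2)²`, so a function of the parity class whose three nonzero values add up to `2z` is a
solution; its values on the classes of `(1,0)` and `(0,1)` are free.
-/

open Matrix ModularGroup MatrixGroups

section Uniqueness

variable {M : Type*} [AddCommGroup M] {F : ℤ × ℤ → M}

theorem apply_SL2Z_cols_eq_zero
    (hadd : ∀ m n r s : ℤ, m * s - n * r = 1 → F (m + r, n + s) + F (m, n) + F (r, s) = 0)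
    (hneg : ∀ m n : ℤ, F (-m, -n) = F (m, n)) (h10 : F (1, 0) = 0) (h01 : F (0, 1) = 0)
    (g : SL(2, ℤ)) : F (g 0 0, g 1 0) = 0 ∧ F (g 0 1, g 1 1) = 0 := by
  have hdet (g : SL(2, ℤ)) : g 0 0 * g 1 1 - g 1 0 * g 0 1 = 1 := by
    linear_combination (det_fin_two (g : Matrix (Fin 2) (Fin 2) ℤ)).symm.trans g.2
  have vanish_add {m n r s : ℤ} (h : m * s - n * r = 1) (hu : F (m, n) = 0)
      (hv : F (r, s) = 0) : F (m + r, n + s) = 0 := by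
    simpa [hu, hv] using hadd m n r s h
  have vanish_sub {m n r s : ℤ} (h : m * s - n * r = 1) (hu : F (m, n) = 0)
      (hv : F (r, s) = 0) : F (r - m, s - n) = 0 := by
    simpa [hu, hv] using hadd m n (r - m) (s - n) (by linear_combination h)
  induction (SpecialLinearGroup.SL2Z_generators ▸ Subgroup.mem_top g :
      g ∈ Subgroup.closure {S, T}) using Subgroup.closure_induction_right with
  | one => simpa using ⟨h10, h01⟩
  | mul_right g _ x hx ih =>
    rcases hx with rfl | rfl
    · simpa [Matrix.mul_apply, Fin.sum_univ_two, hneg] using ih.symm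
    · simpa [Matrix.mul_apply, Fin.sum_univ_two] using ⟨ih.1, vanish_add (hdet g) ih.1 ih.2⟩
  | mul_inv_cancel g _ x hx ih =>
    rcases hx with rfl | rfl
    · simpa [S_inv, Matrix.mul_apply, Fin.sum_univ_two, hneg] using ih.symm
    · simpa [Matrix.mul_apply, Fin.sum_univ_two, neg_add_eq_sub] using
        ⟨ih.1, vanish_sub (hdet g) ih.1 ih.2⟩

theorem exists_SL2Z_col_eq {m n : ℤ} (h : Int.gcd m n = 1) :
    ∃ g : SL(2, ℤ), g 0 0 = m ∧ g 1 0 = n := by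
  obtain ⟨u, v, huv⟩ := Int.isCoprime_iff_gcd_eq_one.mpr h
  exact ⟨⟨!![m, -v; n, u], by rw [det_fin_two_of]; linear_combination huv⟩, rfl, rfl⟩

theorem apply_eq_zero_of_gcd_eq_one
    (hadd : ∀ m n r s : ℤ, m * s - n * r = 1 → F (m + r, n + s) + F (m, n) + F (r, s) = 0)
    (hneg : ∀ m n : ℤ, F (-m, -n) = F (m, n)) (h10 : F (1, 0) = 0) (h01 : F (0, 1) = 0)
    {m n : ℤ} (h : Int.gcd m n = 1) : F (m, n) = 0 := by
  obtain ⟨g, rfl, rfl⟩ := exists_SL2Z_col_eq h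
  exact (apply_SL2Z_cols_eq_zero hadd hneg h10 h01 g).1

end Uniqueness

theorem ZMod.two_apply_add_add_of_det_eq_one {M : Type*} [AddCommGroup M]
    (c : ZMod 2 × ZMod 2 → M) {m n r s : ZMod 2} (h : m * s - n * r = 1) :
    c (m + r, n + s) + c (m, n) + c (r, s) = c (1, 0) + c (0, 1) + c (1, 1) := by
  have two : ∀ x : ZMod 2, x = 0 ∨ x = 1 := by decide
  rcases two m with rfl | rfl <;> rcases two n with rfl | rfl <;>
    rcases two r with rfl | rfl <;> rcases two s with rfl | rfl
  all_goals first
    | exact absurd h (by decide)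
    | (simp only [add_zero, zero_add, show (1 : ZMod 2) + 1 = 0 from rfl] <;> abel)

def parityClassValue (z a b : ℂ) (c : ZMod 2 × ZMod 2) : ℂ :=
  if c.1 = 0 then b else if c.2 = 0 then a else 2 * z - a - b

def paritySolution (z a b : ℂ) (p : PrimVec) : ℂ :=
  parityClassValue z a b (p.1.1, p.1.2)

theorem paritySolution_mem (z a b : ℂ) :
    ((z, paritySolution z a b) : ℂ × (PrimVec → ℂ)) ∈ JWSpace := by
  refine ⟨fun p => ?_, fun m n r s h => ?_⟩
  · simp only [paritySolution, Int.cast_neg, ZMod.neg_eq_self_mod_two]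
  · have h2 : (m : ZMod 2) * s - n * r = 1 := by
      exact_mod_cast congrArg (Int.cast : ℤ → ZMod 2) h
    simp only [paritySolution, Int.cast_add]
    rw [ZMod.two_apply_add_add_of_det_eq_one _ h2]
    simp [parityClassValue]

def extendByZero {M : Type*} [Zero M] (f : PrimVec → M) (p : ℤ × ℤ) : M :=
  if h : Int.gcd p.1 p.2 = 1 then f ⟨p, h⟩ else 0

theorem eq_zero_of_mem_JWSpace {w : ℂ × (PrimVec → ℂ)} (hw : w ∈ JWSpace) (hz : w.1 = 0)
    (h10 : w.2 ⟨(1, 0), prim10⟩ = 0) (h01 : w.2 ⟨(0, 1), prim01⟩ = 0) : w.2 = 0 := by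
  obtain ⟨heven, hcon⟩ := hw
  have hadd (m n r s : ℤ) (h : m * s - n * r = 1) :
      extendByZero w.2 (m + r, n + s) + extendByZero w.2 (m, n) + extendByZero w.2 (r, s) = 0 := by
    simpa [extendByZero, prim_add h, prim_fst h, prim_snd h, hz] using hcon m n r s h
  have hneg (m n : ℤ) : extendByZero w.2 (-m, -n) = extendByZero w.2 (m, n) := by
    simp only [extendByZero, Int.neg_gcd, Int.gcd_neg]
    split_ifs with hp
    · exact heven ⟨(m, n), hp⟩
    · rfl
  funext p
  exact (dif_pos p.2).symm.trans <| apply_eq_zero_of_gcd_eq_one hadd hneg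
    (by simpa [extendByZero] using h10) (by simpa [extendByZero] using h01) p.2

/-- **The ground-state degeneracy in the (even, even) sector is three.** The ℂ-linear map
sending a zero-energy (even, even)-sector state `(z, f)` of the Jones–Wenzl loop model on
the torus to `(z, f(1,0), f(0,1))` is bijective; in particular the space of such states is
exactly three-dimensional. -/
theorem JW_even_even_sector_three_dimensional :
    Function.Bijective evalJW ∧ Module.finrank ℂ JWSpace = 3 := by
  have hinj : Function.Injective evalJW := by
    refine (injective_iff_map_eq_zero evalJW).mpr fun w hw => ?_
    simp only [evalJW, LinearMap.coe_mk, AddHom.coe_mk, Prod.mk_eq_zero] at hw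
    exact Subtype.ext (Prod.ext hw.1 (eq_zero_of_mem_JWSpace w.2 hw.1 hw.2.1 hw.2.2))
  have hsurj : Function.Surjective evalJW := fun ⟨z, a, b⟩ =>
    ⟨⟨(z, paritySolution z a b), paritySolution_mem z a b⟩, by
      simp [evalJW, paritySolution, parityClassValue]⟩
  refine ⟨⟨hinj, hsurj⟩, ?_⟩
  rw [(LinearEquiv.ofBijective evalJW ⟨hinj, hsurj⟩).finrank_eq]
  simp
end
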